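/- The function w(x) := 1 + 2 ∫₀ˣ e^{1 − e^{−y}} dy satisfies w(x) − 1 = ∫₀ˣ (e^{−y} + e^{−(x−y)}) w(y) dy for all x ≥ 0; equivalently, w solves the ODE w''(x) = e^{−x} w'(x) with w(0) = 1 and w'(0) = 2 together with the above Volterra equation. -/

import Mathlib

/-!
Write `w' = 2 exp (1 - exp (-y))`, so that `w'' = exp (-y) w'`. For any solution `f` of this ODE,
`f' - exp (-y) f` is an antiderivative of `exp (-y) f` and `exp y (f - f') + f` one of `exp y f`;
the boundary terms at `0` of the Volterra integral cancel exactly when `f 0 = 1` and `f' 0 = 2`.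
-/

open MeasureTheory Real

/-- The function `w(x) = 1 + 2 ∫₀ˣ e^{1 − e^{−y}} dy`. -/
noncomputable def w (x : ℝ) : ℝ := 1 + 2 * ∫ y in (0:ℝ)..x, Real.exp (1 - Real.exp (-y))

lemma hasDerivAt_exp_neg (y : ℝ) : HasDerivAt (fun t => exp (-t)) (-exp (-y)) y := by
  simpa using (hasDerivAt_neg y).exp

section ExpODE

variable {f f' : ℝ → ℝ} (hf : ∀ y, HasDerivAt f (f' y) y)
  (hf' : ∀ y, HasDerivAt f' (exp (-y) * f' y) y)
include hf hf'

lemma integral_exp_neg_mul_of_hasDerivAt (x : ℝ) :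
    ∫ y in (0:ℝ)..x, exp (-y) * f y = f' x - exp (-x) * f x - (f' 0 - f 0) := by
  have hcont : Continuous f := continuous_iff_continuousAt.2 fun y => (hf y).continuousAt
  have hF : ∀ y ∈ Set.uIcc 0 x,
      HasDerivAt (fun t => f' t - exp (-t) * f t) (exp (-y) * f y) y := fun y _ =>
    ((hf' y).sub ((hasDerivAt_exp_neg y).mul (hf y))).congr_deriv (by ring)
  rw [intervalIntegral.integral_eq_sub_of_hasDerivAt hF
    ((by fun_prop : Continuous fun y => exp (-y) * f y).intervalIntegrable 0 x)]
  simp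

lemma integral_exp_mul_of_hasDerivAt (x : ℝ) :
    ∫ y in (0:ℝ)..x, exp y * f y = exp x * (f x - f' x) + f x - (2 * f 0 - f' 0) := by
  have hcont : Continuous f := continuous_iff_continuousAt.2 fun y => (hf y).continuousAt
  have hF : ∀ y ∈ Set.uIcc 0 x,
      HasDerivAt (fun t => exp t * (f t - f' t) + f t) (exp y * f y) y := fun y _ => by
    refine (((hasDerivAt_exp y).mul ((hf y).sub (hf' y))).add (hf y)).congr_deriv ?_
    have : exp y * exp (-y) = 1 := by rw [← exp_add]; simp
    rw [Pi.sub_apply]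
    linear_combination (-f' y) * this
  rw [intervalIntegral.integral_eq_sub_of_hasDerivAt hF
    ((by fun_prop : Continuous fun y => exp y * f y).intervalIntegrable 0 x)]
  simp
  ring

lemma integral_exp_neg_add_exp_sub_mul_of_hasDerivAt (x : ℝ) :
    ∫ y in (0:ℝ)..x, (exp (-y) + exp (-(x - y))) * f y =
      f x + f 0 - f' 0 - exp (-x) * (2 * f 0 - f' 0) := by
  have hcont : Continuous f := continuous_iff_continuousAt.2 fun y => (hf y).continuousAt
  have hsplit : (fun y => (exp (-y) + exp (-(x - y))) * f y) =
      fun y => exp (-y) * f y + exp (-x) * (exp y * f y) := by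
    ext y
    rw [neg_sub, sub_eq_add_neg, exp_add]
    ring
  rw [hsplit, intervalIntegral.integral_add
      ((by fun_prop : Continuous fun y => exp (-y) * f y).intervalIntegrable 0 x)
      ((by fun_prop : Continuous fun y => exp (-x) * (exp y * f y)).intervalIntegrable 0 x),
    intervalIntegral.integral_const_mul, integral_exp_neg_mul_of_hasDerivAt hf hf',
    integral_exp_mul_of_hasDerivAt hf hf']
  have : exp (-x) * exp x = 1 := by rw [← exp_add]; simp
  linear_combination (f x - f' x) * this

end ExpODE

lemma hasDerivAt_w (x : ℝ) : HasDerivAt w (2 * exp (1 - exp (-x))) x := by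
  have hcont : Continuous fun y : ℝ => exp (1 - exp (-y)) := by fun_prop
  exact ((intervalIntegral.integral_hasDerivAt_right (hcont.intervalIntegrable 0 x)
    (hcont.stronglyMeasurableAtFilter _ _) hcont.continuousAt).const_mul 2).const_add 1

lemma hasDerivAt_two_mul_exp_one_sub_exp_neg (x : ℝ) :
    HasDerivAt (fun t => 2 * exp (1 - exp (-t))) (exp (-x) * (2 * exp (1 - exp (-x)))) x :=
  (((hasDerivAt_exp_neg x).const_sub 1).exp.const_mul 2).congr_deriv (by ring)

lemma deriv_w : deriv w = fun x => 2 * exp (1 - exp (-x)) :=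
  funext fun x => (hasDerivAt_w x).deriv

lemma w_zero : w 0 = 1 := by simp [w]

theorem stmt_4 :
    (∀ x : ℝ, 0 ≤ x →
      w x - 1 = ∫ y in (0:ℝ)..x, (Real.exp (-y) + Real.exp (-(x - y))) * w y) ∧
    w 0 = 1 ∧ deriv w 0 = 2 ∧
    (∀ x : ℝ, 0 ≤ x → deriv (deriv w) x = Real.exp (-x) * deriv w x) := by
  refine ⟨fun x _ => ?_, w_zero, by simp [deriv_w], fun x _ => ?_⟩
  · rw [integral_exp_neg_add_exp_sub_mul_of_hasDerivAt hasDerivAt_w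
      hasDerivAt_two_mul_exp_one_sub_exp_neg, w_zero]
    norm_num
    ring
  · rw [deriv_w, (hasDerivAt_two_mul_exp_one_sub_exp_neg x).deriv]
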